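/- arXiv:2103.03794 — 2 statements merged into one kernel-verified Lean document; each statement's English description precedes it below -/
import Mathlib

section
/- Sum over a hyperbola of representations: for each nonzero integer k, the sum over pairs of integers (m₁, m₂) with m₁ ≠ m₂ and m₁² − m₂² = k of |m₁ − m₂|^{−(1+2δ)} equals 2·σ_{−1−2δ}(|k|) if k is odd, equals 2^{−2δ}·σ_{−1−2δ}(|k|/4) if k ≡ 0 (mod 4), and equals 0 if k ≡ 2 (mod 4), where σ_s(m) = Σ_{d | m, d>0} d^s and δ > 0. -/
open Finset

private lemma hyp_aux {k d : ℤ} (hk : k ≠ 0) (hdvd : d ∣ k)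
    (hpar : (d + k / d) % 2 = 0) :
    (d + k / d) / 2 - (k / d - d) / 2 = d ∧
    (d + k / d) / 2 + (k / d - d) / 2 = k / d ∧
    ((d + k / d) / 2) ^ 2 - ((k / d - d) / 2) ^ 2 = k ∧
    -|k| ≤ (d + k / d) / 2 ∧ (d + k / d) / 2 ≤ |k| ∧
    -|k| ≤ (k / d - d) / 2 ∧ (k / d - d) / 2 ≤ |k| := by
  have he : d * (k / d) = k := Int.mul_ediv_cancel' hdvd
  set e := k / d with hedef
  have hdk : |d| ≤ |k| := Int.le_of_dvd (abs_pos.mpr hk) (by rw [abs_dvd, dvd_abs]; exact hdvd)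
  have hek : |e| ≤ |k| := Int.le_of_dvd (abs_pos.mpr hk)
    (by rw [abs_dvd, dvd_abs]; exact ⟨d, by rw [← he]; ring⟩)
  have h1 : (d + e) / 2 - (e - d) / 2 = d := by omega
  have h2 : (d + e) / 2 + (e - d) / 2 = e := by omega
  refine ⟨h1, h2, ?_, ?_⟩
  · linear_combination ((d + e) / 2 + (e - d) / 2) * h1 + d * h2 + he
  · rw [abs_le] at hdk hek
    refine ⟨?_, ?_, ?_, ?_⟩ <;> omega

private lemma hyp_aux_odd {k d : ℤ} (hk : k ≠ 0) (hodd : Odd k) (hdvd : d ∣ k) (hd0 : d ≠ 0) :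
    (d + k / d) / 2 - (k / d - d) / 2 = d ∧
    (d + k / d) / 2 + (k / d - d) / 2 = k / d ∧
    ((d + k / d) / 2) ^ 2 - ((k / d - d) / 2) ^ 2 = k ∧
    -|k| ≤ (d + k / d) / 2 ∧ (d + k / d) / 2 ≤ |k| ∧
    -|k| ≤ (k / d - d) / 2 ∧ (k / d - d) / 2 ≤ |k| := by
  have hmul : d * (k / d) = k := Int.mul_ediv_cancel' hdvd
  obtain ⟨ho1, ho2⟩ := Int.odd_mul.mp (hmul ▸ hodd)
  exact hyp_aux hk hdvd (by rw [Int.odd_iff] at ho1 ho2; omega)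

private lemma hyp_aux_four {k d : ℤ} (hk : k ≠ 0) (h4 : (4:ℤ) ∣ k) (hdvd2 : d ∣ k / 4) (hd0 : d ≠ 0) :
    (2*d + k / (2*d)) / 2 - (k / (2*d) - 2*d) / 2 = 2*d ∧
    (2*d + k / (2*d)) / 2 + (k / (2*d) - 2*d) / 2 = k / (2*d) ∧
    ((2*d + k / (2*d)) / 2) ^ 2 - ((k / (2*d) - 2*d) / 2) ^ 2 = k ∧
    -|k| ≤ (2*d + k / (2*d)) / 2 ∧ (2*d + k / (2*d)) / 2 ≤ |k| ∧
    -|k| ≤ (k / (2*d) - 2*d) / 2 ∧ (k / (2*d) - 2*d) / 2 ≤ |k| := by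
  have h44 : 4 * (k / 4) = k := Int.mul_ediv_cancel' h4
  have hdvd : 2 * d ∣ k := by
    rw [← h44]; exact mul_dvd_mul (by norm_num) hdvd2
  have hu : d * (k / 4 / d) = k / 4 := Int.mul_ediv_cancel' hdvd2
  have hmul : (2*d) * (k / (2*d)) = k := Int.mul_ediv_cancel' hdvd
  have heven : k / (2*d) = 2 * (k / 4 / d) := by
    apply mul_left_cancel₀ (a := 2*d) (by simpa using hd0)
    rw [hmul]
    calc k = 4 * (k / 4) := h44.symm
    _ = 2*d*(2*(k/4/d)) := by linear_combination (-4 : ℤ) * hu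
  exact hyp_aux hk hdvd (by omega)

/-- Sum over the hyperbola `m₁² − m₂² = k` of `|m₁−m₂|^{−(1+2δ)}`:
equals `2 σ_{−1−2δ}(|k|)` for `k` odd, `2^{−2δ} σ_{−1−2δ}(|k|/4)` for `4 ∣ k`,
and `0` for `k ≡ 2 (mod 4)`. -/
theorem stmt11 (δ : ℝ) (hδ : 0 < δ) (k : ℤ) (hk : k ≠ 0) :
    (Odd k →
      (∑' m : ℤ × ℤ, if m.1 ≠ m.2 ∧ m.1 ^ 2 - m.2 ^ 2 = k
          then |((m.1 : ℝ)) - (m.2 : ℝ)| ^ (-(1 + 2 * δ)) else 0) =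
        2 * ∑ d ∈ (k.natAbs).divisors, (d : ℝ) ^ (-(1 + 2 * δ))) ∧
    ((4 : ℤ) ∣ k →
      (∑' m : ℤ × ℤ, if m.1 ≠ m.2 ∧ m.1 ^ 2 - m.2 ^ 2 = k
          then |((m.1 : ℝ)) - (m.2 : ℝ)| ^ (-(1 + 2 * δ)) else 0) =
        (2 : ℝ) ^ (-(2 * δ)) * ∑ d ∈ (k.natAbs / 4).divisors, (d : ℝ) ^ (-(1 + 2 * δ))) ∧
    (k % 4 = 2 →
      (∑' m : ℤ × ℤ, if m.1 ≠ m.2 ∧ m.1 ^ 2 - m.2 ^ 2 = k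
          then |((m.1 : ℝ)) - (m.2 : ℝ)| ^ (-(1 + 2 * δ)) else 0) = 0) := by
  classical
  have hK : (0:ℤ) < |k| := abs_pos.mpr hk
  set B : Finset (ℤ × ℤ) := Finset.Icc (-|k|, -|k|) (|k|, |k|) with hB
  set T : Finset (ℤ × ℤ) := B.filter (fun m => m.1 ≠ m.2 ∧ m.1 ^ 2 - m.2 ^ 2 = k) with hT
  have hTfac : ∀ m ∈ T, (m.1 - m.2) * (m.1 + m.2) = k ∧ m.1 - m.2 ≠ 0 := by
    intro m hm
    rw [hT, Finset.mem_filter] at hm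
    obtain ⟨-, h1, h2⟩ := hm
    exact ⟨by linear_combination h2, sub_ne_zero.mpr h1⟩
  have hsupp : ∀ m : ℤ × ℤ, m ∉ B →
      (if m.1 ≠ m.2 ∧ m.1 ^ 2 - m.2 ^ 2 = k
          then |((m.1 : ℝ)) - (m.2 : ℝ)| ^ (-(1 + 2 * δ)) else 0) = 0 := by
    intro m hm
    rw [if_neg]
    rintro ⟨h1, h2⟩
    apply hm
    have hfac : (m.1 - m.2) * (m.1 + m.2) = k := by linear_combination h2
    have hd0 : m.1 - m.2 ≠ 0 := sub_ne_zero.mpr h1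
    have hdk : |m.1 - m.2| ≤ |k| := Int.le_of_dvd hK
      (by rw [abs_dvd, dvd_abs]; exact ⟨m.1 + m.2, hfac.symm⟩)
    have hek : |m.1 + m.2| ≤ |k| := Int.le_of_dvd hK
      (by rw [abs_dvd, dvd_abs]; exact ⟨m.1 - m.2, by rw [← hfac]; ring⟩)
    rw [abs_le] at hdk hek
    simp only [hB, Finset.mem_Icc, Prod.le_def]
    refine ⟨⟨?_, ?_⟩, ?_, ?_⟩ <;> omega
  have htsum : (∑' m : ℤ × ℤ, if m.1 ≠ m.2 ∧ m.1 ^ 2 - m.2 ^ 2 = k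
      then |((m.1 : ℝ)) - (m.2 : ℝ)| ^ (-(1 + 2 * δ)) else 0)
      = ∑ m ∈ T, |((m.1 : ℝ)) - (m.2 : ℝ)| ^ (-(1 + 2 * δ)) := by
    rw [tsum_eq_sum hsupp, hT, Finset.sum_filter]
  refine ⟨?_, ?_, ?_⟩
  · intro hodd
    rw [htsum]
    have hDne : k.natAbs ≠ 0 := Int.natAbs_ne_zero.mpr hk
    have hsd : ∀ n : ℕ, ∀ b : Bool, n ∈ k.natAbs.divisors →
        ∃ d : ℤ, (if b then (n:ℤ) else -(n:ℤ)) = d ∧ d.natAbs = n ∧ decide (0 < d) = b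
          ∧ d ∣ k ∧ d ≠ 0 := by
      intro n b hx
      rw [Nat.mem_divisors] at hx
      have hn0 : 0 < n := Nat.pos_of_ne_zero (by rintro rfl; exact hDne (Nat.eq_zero_of_zero_dvd hx.1))
      have hcast : (n:ℤ) ∣ k := Int.natAbs_dvd_natAbs.mp (by simpa using hx.1)
      cases b
      · exact ⟨-(n:ℤ), by simp, by simp, by simp only [decide_eq_false_iff_not]; omega,
          by simpa [neg_dvd] using hcast, by simp; omega⟩
      · exact ⟨(n:ℤ), by simp, by simp, by simp only [decide_eq_true_eq]; omega,
          hcast, by simp; omega⟩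
    have key : ∑ m ∈ T, |((m.1 : ℝ)) - (m.2 : ℝ)| ^ (-(1 + 2 * δ))
        = ∑ x ∈ k.natAbs.divisors ×ˢ (Finset.univ : Finset Bool), ((x.1 : ℝ)) ^ (-(1 + 2 * δ)) := by
      refine Finset.sum_nbij' (fun m => ((m.1 - m.2).natAbs, decide (0 < m.1 - m.2)))
        (fun x => (((if x.2 then (x.1:ℤ) else -(x.1:ℤ)) + k / (if x.2 then (x.1:ℤ) else -(x.1:ℤ))) / 2,
          (k / (if x.2 then (x.1:ℤ) else -(x.1:ℤ)) - (if x.2 then (x.1:ℤ) else -(x.1:ℤ))) / 2))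
        ?_ ?_ ?_ ?_ ?_
      · -- hi
        intro m hm
        obtain ⟨hfac, hd0⟩ := hTfac m hm
        simp only [Finset.mem_product, Nat.mem_divisors, Finset.mem_univ, and_true]
        exact ⟨Int.natAbs_dvd_natAbs.mpr ⟨m.1 + m.2, hfac.symm⟩, hDne⟩
      · -- hj
        rintro ⟨n, b⟩ hx
        rw [Finset.mem_product] at hx
        obtain ⟨d, hDeq, hdabs, hdsgn, hdvd, hd0⟩ := hsd n b hx.1
        dsimp only
        rw [hDeq]
        obtain ⟨h1, h2, hsq, hb1, hb2, hb3, hb4⟩ := hyp_aux_odd hk hodd hdvd hd0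
        rw [hT, Finset.mem_filter]
        refine ⟨?_, ?_, hsq⟩
        · simp only [hB, Finset.mem_Icc, Prod.le_def]
          exact ⟨⟨hb1, hb3⟩, hb2, hb4⟩
        · intro heq
          dsimp only at heq
          omega
      · -- left_inv
        intro m hm
        obtain ⟨hfac, hd0⟩ := hTfac m hm
        have he : k / (m.1 - m.2) = m.1 + m.2 := by
          rw [← hfac, Int.mul_ediv_cancel_left _ hd0]
        dsimp only
        have hd' : (if decide (0 < m.1 - m.2) then ((m.1 - m.2).natAbs:ℤ) else -((m.1 - m.2).natAbs:ℤ))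
            = m.1 - m.2 := by
          split_ifs with h <;> simp only [decide_eq_true_eq, not_lt] at h <;> omega
        rw [hd', he, Prod.ext_iff]
        constructor <;> dsimp only <;> omega
      · -- right_inv
        rintro ⟨n, b⟩ hx
        rw [Finset.mem_product] at hx
        obtain ⟨d, hDeq, hdabs, hdsgn, hdvd, hd0⟩ := hsd n b hx.1
        dsimp only
        rw [hDeq]
        obtain ⟨h1, h2, hsq, hb1, hb2, hb3, hb4⟩ := hyp_aux_odd hk hodd hdvd hd0
        rw [h1, Prod.ext_iff]
        exact ⟨hdabs, hdsgn⟩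
      · -- term equality
        intro m hm
        dsimp only
        congr 1
        rw [Nat.cast_natAbs]
        push_cast
        ring
    rw [key, Finset.sum_product]
    simp only [Finset.sum_const, Finset.card_univ, Fintype.card_bool, nsmul_eq_mul, Nat.cast_ofNat]
    rw [← Finset.mul_sum]
  · intro h4
    rw [htsum]
    have hnat4 : (k/4).natAbs = k.natAbs / 4 := by omega
    have hDne : k.natAbs / 4 ≠ 0 := by omega
    have hk4 : k / 4 ≠ 0 := by omega
    -- parity of solutions: both factors even
    have hTeven : ∀ m ∈ T, (m.1 - m.2) % 2 = 0 ∧ (m.1 + m.2) % 2 = 0 := by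
      intro m hm
      obtain ⟨hfac, hd0⟩ := hTfac m hm
      have hpar : (m.1 - m.2) % 2 = (m.1 + m.2) % 2 := by omega
      rcases Int.even_or_odd (m.1 - m.2) with hev | hod
      · rw [Int.even_iff] at hev; omega
      · exfalso
        have he' : Odd (m.1 + m.2) := by rw [Int.odd_iff] at hod ⊢; omega
        have : Odd k := hfac ▸ hod.mul he'
        rw [Int.odd_iff] at this; omega
    -- the signed divisor of k/4
    have hsd : ∀ n : ℕ, ∀ b : Bool, n ∈ (k.natAbs / 4).divisors →
        ∃ d : ℤ, (if b then (n:ℤ) else -(n:ℤ)) = d ∧ d.natAbs = n ∧ decide (0 < d) = b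
          ∧ d ∣ k / 4 ∧ d ≠ 0 := by
      intro n b hx
      rw [Nat.mem_divisors] at hx
      have hn0 : 0 < n := Nat.pos_of_ne_zero (by rintro rfl; exact hDne (Nat.eq_zero_of_zero_dvd hx.1))
      have hcast : (n:ℤ) ∣ k / 4 := Int.natAbs_dvd_natAbs.mp (by simpa [hnat4] using hx.1)
      cases b
      · exact ⟨-(n:ℤ), by simp, by simp, by simp only [decide_eq_false_iff_not]; omega,
          by simpa [neg_dvd] using hcast, by simp; omega⟩
      · exact ⟨(n:ℤ), by simp, by simp, by simp only [decide_eq_true_eq]; omega,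
          hcast, by simp; omega⟩
    have key : ∑ m ∈ T, |((m.1 : ℝ)) - (m.2 : ℝ)| ^ (-(1 + 2 * δ))
        = ∑ x ∈ (k.natAbs / 4).divisors ×ˢ (Finset.univ : Finset Bool),
            (2:ℝ) ^ (-(1 + 2 * δ)) * ((x.1 : ℝ)) ^ (-(1 + 2 * δ)) := by
      refine Finset.sum_nbij' (fun m => ((m.1 - m.2).natAbs / 2, decide (0 < m.1 - m.2)))
        (fun x => ((2 * (if x.2 then (x.1:ℤ) else -(x.1:ℤ)) + k / (2 * (if x.2 then (x.1:ℤ) else -(x.1:ℤ)))) / 2,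
          (k / (2 * (if x.2 then (x.1:ℤ) else -(x.1:ℤ))) - 2 * (if x.2 then (x.1:ℤ) else -(x.1:ℤ))) / 2))
        ?_ ?_ ?_ ?_ ?_
      · -- hi
        intro m hm
        obtain ⟨hfac, hd0⟩ := hTfac m hm
        obtain ⟨hev, hev'⟩ := hTeven m hm
        simp only [Finset.mem_product, Nat.mem_divisors, Finset.mem_univ, and_true]
        refine ⟨?_, hDne⟩
        -- (m.1-m.2).natAbs / 2 ∣ k.natAbs / 4
        have ha : ((m.1 - m.2) / 2) ∣ k / 4 := by
          refine ⟨(m.1 + m.2) / 2, ?_⟩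
          have : 4 * (((m.1 - m.2) / 2) * ((m.1 + m.2) / 2)) = 4 * (k / 4) := by
            have e1 : 2 * ((m.1 - m.2) / 2) = m.1 - m.2 := by omega
            have e2 : 2 * ((m.1 + m.2) / 2) = m.1 + m.2 := by omega
            have e3 : 4 * (k / 4) = k := Int.mul_ediv_cancel' h4
            rw [e3, ← hfac]
            linear_combination (2*((m.1+m.2)/2)) * e1 + (m.1-m.2) * e2
          omega
        have hq : ((m.1 - m.2)/2).natAbs = (m.1 - m.2).natAbs / 2 := by omega
        rw [← hq, ← hnat4]
        exact Int.natAbs_dvd_natAbs.mpr ha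
      · -- hj
        rintro ⟨n, b⟩ hx
        rw [Finset.mem_product] at hx
        obtain ⟨d, hDeq, hdabs, hdsgn, hdvd, hd0⟩ := hsd n b hx.1
        dsimp only
        rw [hDeq]
        obtain ⟨h1, h2, hsq, hb1, hb2, hb3, hb4⟩ := hyp_aux_four hk h4 hdvd hd0
        rw [hT, Finset.mem_filter]
        refine ⟨?_, ?_, hsq⟩
        · simp only [hB, Finset.mem_Icc, Prod.le_def]
          exact ⟨⟨hb1, hb3⟩, hb2, hb4⟩
        · intro heq
          dsimp only at heq
          omega
      · -- left_inv
        intro m hm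
        obtain ⟨hfac, hd0⟩ := hTfac m hm
        obtain ⟨hev, hev'⟩ := hTeven m hm
        have he : k / (m.1 - m.2) = m.1 + m.2 := by
          rw [← hfac, Int.mul_ediv_cancel_left _ hd0]
        dsimp only
        have hd' : 2 * (if decide (0 < m.1 - m.2) then (((m.1 - m.2).natAbs / 2 : ℕ):ℤ)
            else -(((m.1 - m.2).natAbs / 2 : ℕ):ℤ)) = m.1 - m.2 := by
          split_ifs with h <;> simp only [decide_eq_true_eq, not_lt] at h <;> omega
        rw [hd', he, Prod.ext_iff]
        constructor <;> dsimp only <;> omega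
      · -- right_inv
        rintro ⟨n, b⟩ hx
        rw [Finset.mem_product] at hx
        obtain ⟨d, hDeq, hdabs, hdsgn, hdvd, hd0⟩ := hsd n b hx.1
        dsimp only
        rw [hDeq]
        obtain ⟨h1, h2, hsq, hb1, hb2, hb3, hb4⟩ := hyp_aux_four hk h4 hdvd hd0
        rw [h1, Prod.ext_iff]
        refine ⟨by omega, ?_⟩
        rw [← hdsgn]
        exact decide_eq_decide.mpr (by omega)
      · -- term equality
        intro m hm
        obtain ⟨hfac, hd0⟩ := hTfac m hm
        obtain ⟨hev, hev'⟩ := hTeven m hm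
        dsimp only
        have habs : |((m.1 : ℝ)) - (m.2 : ℝ)| = 2 * (((m.1 - m.2).natAbs / 2 : ℕ) : ℝ) := by
          have : ((m.1 - m.2).natAbs : ℝ) = 2 * (((m.1 - m.2).natAbs / 2 : ℕ) : ℝ) := by
            have : (m.1 - m.2).natAbs = 2 * ((m.1 - m.2).natAbs / 2) := by omega
            exact_mod_cast this
          rw [← this, Nat.cast_natAbs]
          push_cast
          ring
        rw [habs, Real.mul_rpow (by norm_num) (Nat.cast_nonneg _)]
    rw [key, Finset.sum_product]
    simp only [Finset.sum_const, Finset.card_univ, Fintype.card_bool, nsmul_eq_mul, Nat.cast_ofNat]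
    rw [show (2:ℝ) ^ (-(2 * δ)) = 2 * (2:ℝ) ^ (-(1 + 2 * δ)) by
      rw [show -(2*δ) = 1 + -(1+2*δ) by ring, Real.rpow_add (by norm_num), Real.rpow_one]]
    rw [mul_assoc, Finset.mul_sum, ← Finset.mul_sum]
  · intro h2
    rw [htsum]
    apply Finset.sum_eq_zero
    intro m hm
    exfalso
    obtain ⟨hfac, hd0⟩ := hTfac m hm
    set d := m.1 - m.2
    set e := m.1 + m.2 with hedef
    have hpar : d % 2 = e % 2 := by omega
    rcases Int.even_or_odd d with hev | hod
    · obtain ⟨a, ha⟩ := hev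
      have hbe : e % 2 = 0 := by omega
      obtain ⟨b, hb⟩ : ∃ b, e = 2 * b := ⟨e / 2, by omega⟩
      have : (4:ℤ) ∣ k := ⟨a * b, by rw [← hfac, ha, hb]; ring⟩
      omega
    · have he' : Odd e := by rw [Int.odd_iff] at hod ⊢; omega
      have : Odd k := hfac ▸ hod.mul he'
      rw [Int.odd_iff] at this
      omega
end

section
/- Smallest denominator near an irrational of finite irrationality measure: let t be irrational with irrationality measure μ(t) = μ < ∞, and fix ε > 0. Then for all sufficiently small h > 0, the fraction P/Q of smallest denominator among all reduced fractions p/q with |t − p/q| < h satisfies h^{−1/(μ+ε)} < Q ≤ h^{−1 + 1/(μ+ε)}. -/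
/-! Put `m = μ + ε` and `h = x ^ (-m)`. As `m > μ`, only finitely many `p / q` satisfy
`0 < |t - p / q| < q ^ (-m)`, so every fraction close enough to the irrational `t` has
`|t - p / q| ≥ q ^ (-m)`; for `P / Q` this gives `Q > x`. For the upper bound, Dirichlet's theorem
with `N = ⌊x ^ (m - 1)⌋` yields `p / q` with `q ≤ N` and `|t - p / q| < 1 / (x ^ (m - 1) q)`; the same
lower bound forces `q > x`, hence `|t - p / q| < x ^ (-m) = h`, and minimality gives `Q ≤ q ≤ N`. -/

open Real Filter Topology

def approximants (t m : ℝ) : Set (ℤ × ℕ) :=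
  {pq | 0 < pq.2 ∧ 0 < |t - (pq.1 : ℝ) / pq.2| ∧ |t - (pq.1 : ℝ) / pq.2| < (pq.2 : ℝ) ^ (-m)}

lemma Irrational.abs_sub_int_div_nat_pos {t : ℝ} (ht : Irrational t) (p : ℤ) (q : ℕ) :
    0 < |t - p / q| :=
  abs_pos.mpr (sub_ne_zero.mpr (by exact_mod_cast ht.ne_rational p q))

lemma approximants_two_infinite {t : ℝ} (ht : Irrational t) : (approximants t 2).Infinite := by
  have hinj : Function.Injective fun r : ℚ => (r.num, r.den) := fun a b hab =>
    Rat.ext (congrArg Prod.fst hab) (congrArg Prod.snd hab)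
  refine ((Real.infinite_rat_abs_sub_lt_one_div_den_sq_of_irrational ht).image
    hinj.injOn).mono ?_
  rintro _ ⟨r, hr, rfl⟩
  have hden : (0 : ℝ) < r.den := Nat.cast_pos.mpr r.pos
  refine ⟨r.pos, ht.abs_sub_int_div_nat_pos _ _, ?_⟩
  rw [rpow_neg hden.le, rpow_two, ← one_div, ← Rat.cast_def]
  exact hr

lemma exists_pos_rpow_neg_le_abs_sub_of_finite {t m : ℝ} (ht : Irrational t)
    (hfin : (approximants t m).Finite) :
    ∃ δ > 0, ∀ (p : ℤ) (q : ℕ), 0 < q → |t - p / q| < δ → (q : ℝ) ^ (-m) ≤ |t - p / q| := by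
  have hsmall : ∀ᶠ δ in 𝓝[>] (0 : ℝ), ∀ pq ∈ approximants t m, δ ≤ |t - (pq.1 : ℝ) / pq.2| :=
    (eventually_all_finite hfin).mpr fun pq hpq =>
      nhdsWithin_le_nhds (ge_mem_nhds hpq.2.1)
  obtain ⟨δ, hδ, hδpos⟩ := (hsmall.and self_mem_nhdsWithin).exists
  refine ⟨δ, hδpos, fun p q hq hlt => not_lt.mp fun hgt => ?_⟩
  exact (hδ (p, q) ⟨hq, ht.abs_sub_int_div_nat_pos p q, hgt⟩).not_gt hlt

section

variable {t δ m : ℝ}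

lemma lt_den_of_abs_sub_lt_rpow_neg
    (hδ : ∀ (p : ℤ) (q : ℕ), 0 < q → |t - p / q| < δ → (q : ℝ) ^ (-m) ≤ |t - p / q|)
    (hm : 0 < m) {x : ℝ} (hx : 0 < x) (hxδ : x ^ (-m) ≤ δ)
    {p : ℤ} {q : ℕ} (hq : 0 < q) (hpq : |t - p / q| < x ^ (-m)) : x < q :=
  (rpow_lt_rpow_iff_of_neg (Nat.cast_pos.mpr hq) hx (neg_neg_of_pos hm)).mp
    ((hδ p q hq (hpq.trans_le hxδ)).trans_lt hpq)

lemma exists_den_le_rpow_abs_sub_lt_rpow_neg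
    (hδ : ∀ (p : ℤ) (q : ℕ), 0 < q → |t - p / q| < δ → (q : ℝ) ^ (-m) ≤ |t - p / q|)
    (hm : 1 < m) {x : ℝ} (hx : 1 ≤ x) (hxδ : x ^ (-(m - 1)) ≤ δ) :
    ∃ (p : ℤ) (q : ℕ), 0 < q ∧ (q : ℝ) ≤ x ^ (m - 1) ∧ |t - p / q| < x ^ (-m) := by
  have hx₀ : 0 < x := one_pos.trans_le hx
  set y := x ^ (m - 1) with hy_def
  have hy : 1 ≤ y := one_le_rpow hx (by linarith)
  have hyx : y⁻¹ = x ^ (-(m - 1)) := (rpow_neg hx₀.le _).symm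
  obtain ⟨r, hr, hrn⟩ := Real.exists_rat_abs_sub_le_and_den_le t (Nat.floor_pos.mpr hy)
  rw [Rat.cast_def] at hr
  set q : ℕ := r.den
  have hq : (0 : ℝ) < q := Nat.cast_pos.mpr r.pos
  have hd : |t - r.num / q| < (y * q)⁻¹ := by
    refine hr.trans_lt ?_
    rw [one_div]
    gcongr
    exact Nat.lt_floor_add_one y
  have hdδ : |t - r.num / q| < δ := by
    refine hd.trans_le (le_trans ?_ (hyx ▸ hxδ))
    gcongr
    exact le_mul_of_one_le_right (by positivity) (by exact_mod_cast r.pos)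
  have hxq : x < q := by
    have hpow : (q : ℝ) ^ (-(m - 1)) < x ^ (-(m - 1)) := by
      rw [← hyx, show -(m - 1) = -m + 1 by ring, rpow_add_one hq.ne', ← lt_div_iff₀ hq,
        div_eq_mul_inv, ← mul_inv]
      exact (hδ r.num q r.pos hdδ).trans_lt hd
    exact (rpow_lt_rpow_iff_of_neg hq hx₀ (by linarith)).mp hpow
  refine ⟨r.num, q, r.pos, (Nat.cast_le.mpr hrn).trans (Nat.floor_le (by positivity)), ?_⟩
  calc |t - r.num / q| < (y * q)⁻¹ := hd
    _ ≤ (y * x)⁻¹ := by gcongr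
    _ = x ^ (-m) := by
      rw [hy_def, ← rpow_add_one hx₀.ne', rpow_neg hx₀.le]
      ring_nf

lemma eventually_lt_den_and_den_le_of_minimal
    (hδ : ∀ (p : ℤ) (q : ℕ), 0 < q → |t - p / q| < δ → (q : ℝ) ^ (-m) ≤ |t - p / q|)
    (hδ₀ : 0 < δ) (hm : 1 < m) :
    ∀ᶠ x in atTop, ∀ (P : ℤ) (Q : ℕ), 0 < Q → |t - P / Q| < x ^ (-m) →
      (∀ (p : ℤ) (q : ℕ), 0 < q → |t - p / q| < x ^ (-m) → Q ≤ q) →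
      x < Q ∧ (Q : ℝ) ≤ x ^ (m - 1) := by
  filter_upwards [eventually_ge_atTop 1,
    (tendsto_rpow_neg_atTop (by linarith : 0 < m)).eventually (ge_mem_nhds hδ₀),
    (tendsto_rpow_neg_atTop (by linarith : 0 < m - 1)).eventually (ge_mem_nhds hδ₀)]
    with x hx hxm hxm₁ P Q hQ hPQ hmin
  obtain ⟨p, q, hq, hqx, hpq⟩ := exists_den_le_rpow_abs_sub_lt_rpow_neg hδ hm hx hxm₁
  exact ⟨lt_den_of_abs_sub_lt_rpow_neg hδ (by linarith) (by linarith) hxm hQ hPQ,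
    (Nat.cast_le.mpr (hmin p q hq hpq)).trans hqx⟩

end

/-- Smallest denominator near an irrational `t` of finite irrationality measure `μ`:
for every `ε > 0` and all sufficiently small `h > 0`, the fraction `P/Q` of smallest
denominator among all fractions within distance `h` of `t` satisfies
`h^{−1/(μ+ε)} < Q ≤ h^{−1+1/(μ+ε)}`. -/
theorem stmt14 (t : ℝ) (ht : Irrational t)
    (A : Set ℝ)
    (hA : A = {m : ℝ | 0 < m ∧ Set.Infinite {pq : ℤ × ℕ | 0 < pq.2 ∧
      0 < |t - (pq.1 : ℝ) / pq.2| ∧ |t - (pq.1 : ℝ) / pq.2| < (pq.2 : ℝ) ^ (-m)}})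
    (hbdd : BddAbove A)
    (μ : ℝ) (hμ : μ = sSup A)
    (ε : ℝ) (hε : 0 < ε) :
    ∃ h₀ : ℝ, 0 < h₀ ∧ ∀ h : ℝ, 0 < h → h < h₀ →
      ∀ P : ℤ, ∀ Q : ℕ, 0 < Q → |t - (P : ℝ) / Q| < h →
        (∀ p : ℤ, ∀ q : ℕ, 0 < q → |t - (p : ℝ) / q| < h → Q ≤ q) →
        h ^ (-(1 / (μ + ε))) < (Q : ℝ) ∧ (Q : ℝ) ≤ h ^ (-1 + 1 / (μ + ε)) := by
  subst hA
  have hle_μ : ∀ m, 0 < m → (approximants t m).Infinite → m ≤ μ := fun m hm hinf =>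
    hμ ▸ le_csSup hbdd ⟨hm, hinf⟩
  have hμ₂ : 2 ≤ μ := hle_μ 2 two_pos (approximants_two_infinite ht)
  have hm : 1 < μ + ε := by linarith
  have hfin : (approximants t (μ + ε)).Finite := Set.not_infinite.mp fun hinf =>
    (hle_μ _ (by linarith) hinf).not_gt (by linarith)
  obtain ⟨δ, hδ₀, hδ⟩ := exists_pos_rpow_neg_le_abs_sub_of_finite ht hfin
  obtain ⟨h₀, hh₀, hsub⟩ := mem_nhdsGT_iff_exists_Ioo_subset.mp
    ((tendsto_rpow_neg_nhdsGT_zero (neg_neg_of_pos (by positivity : 0 < 1 / (μ + ε)))).eventually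
      (eventually_lt_den_and_den_le_of_minimal hδ hδ₀ hm))
  refine ⟨h₀, hh₀, fun h hh hlt P Q hQ => ?_⟩
  have hm₀ : μ + ε ≠ 0 := by linarith
  have hx : (h ^ (-(1 / (μ + ε)))) ^ (-(μ + ε)) = h := by
    rw [← rpow_mul hh.le]; field_simp; exact rpow_one h
  have hx' : (h ^ (-(1 / (μ + ε)))) ^ (μ + ε - 1) = h ^ (-1 + 1 / (μ + ε)) := by
    rw [← rpow_mul hh.le]; congr 1; field_simp; ring
  simpa only [hx, hx'] using hsub ⟨hh, hlt⟩ P Q hQ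
end
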